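/- Fix N > 0. There exist constants C > 0 and a₀ > 0 such that for all a with 0 < a ≤ a₀, | ∫_ℝ q₀(z)·L(z) dz + a⁴/N² | ≤ C·a⁶. In other words, the mean of the log-likelihood ratio L under q₀ equals −a⁴/N² + O(a⁶) as a → 0⁺. -/

import Mathlib

open MeasureTheory

/-- Density of the Gaussian distribution with mean `0` and variance `N/2`. -/
noncomputable def q0 (N z : ℝ) : ℝ := (Real.sqrt (Real.pi * N))⁻¹ * Real.exp (-z ^ 2 / N)

/-- Density of the Gaussian distribution with mean `a` and variance `N/2`. -/
noncomputable def qa (N a z : ℝ) : ℝ := (Real.sqrt (Real.pi * N))⁻¹ * Real.exp (-(z - a) ^ 2 / N)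

/-- The binary mixture density `½ q_a + ½ q_{-a}`. -/
noncomputable def qmix (N a z : ℝ) : ℝ := (1 / 2) * qa N a z + (1 / 2) * qa N (-a) z

/-- The log-likelihood ratio `log (q̃(z)/q₀(z))`. -/
noncomputable def llr (N a z : ℝ) : ℝ := Real.log (qmix N a z / q0 N z)

/-!
Completing the square gives `L(z) = -a²/N + log (cosh (2az/N))`. Since
`log (cosh x) = x²/2 - x⁴/12 + O(x⁶)` uniformly in `x`, and the moments of `q₀` are
`E z² = N/2`, `E z⁴ = 3N²/4`, `E z⁶ = 15N³/8`, the mean of `L` is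
`-a²/N + (2a/N)² N/4 - (2a/N)⁴ N²/16 + O(a⁶) = -a⁴/N² + O(a⁶)`.
The even moments come from Gaussian integration by parts.
-/

open Real

noncomputable def logCoshTaylor (x : ℝ) : ℝ := x ^ 2 / 2 - x ^ 4 / 12

lemma abs_cosh_sub_le {x : ℝ} (hx : |x| ≤ 1) :
    |cosh x - (1 + x ^ 2 / 2 + x ^ 4 / 24)| ≤ 7 / 4320 * x ^ 6 := by
  have hpos := Real.exp_bound hx (n := 6) (by norm_num)
  have hneg := Real.exp_bound (x := -x) (by rwa [abs_neg]) (n := 6) (by norm_num)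
  have h6 : |x| ^ 6 = x ^ 6 := by rw [← abs_pow, abs_of_nonneg (by positivity)]
  simp only [Finset.sum_range_succ, Finset.sum_range_zero, abs_neg, h6] at hpos hneg
  norm_num [Nat.factorial] at hpos hneg
  rw [cosh_eq]
  rw [abs_le] at hpos hneg ⊢
  constructor <;> linarith [hpos.1, hpos.2, hneg.1, hneg.2]

lemma abs_log_one_add_sub_le {c : ℝ} (hc₀ : 0 ≤ c) (hc₁ : c ≤ 2 / 3) :
    |log (1 + c) - (c - c ^ 2 / 2)| ≤ 3 * c ^ 3 := by
  have h := abs_log_sub_add_sum_range_le (x := -c)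
    (by rw [abs_neg, abs_of_nonneg hc₀]; linarith) 2
  norm_num [Finset.sum_range_succ, abs_of_nonneg hc₀] at h
  have hfrac : c ^ 3 / (1 - c) ≤ 3 * c ^ 3 := by
    rw [div_le_iff₀ (by linarith)]
    nlinarith [pow_nonneg hc₀ 3]
  rw [show log (1 + c) - (c - c ^ 2 / 2) = -c + c ^ 2 / 2 + log (1 + c) by ring]
  exact h.trans hfrac

lemma abs_log_cosh_sub_logCoshTaylor_le_of_abs_le_one {x : ℝ} (hx : |x| ≤ 1) :
    |log (cosh x) - logCoshTaylor x| ≤ 5 * x ^ 6 := by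
  set c := cosh x - 1
  have hx2 : x ^ 2 ≤ 1 := by nlinarith [abs_nonneg x, sq_abs x]
  have hx4 : 0 ≤ x ^ 4 := by positivity
  have hx6 : 0 ≤ x ^ 6 := by positivity
  have hcosh := abs_cosh_sub_le hx
  rw [show cosh x - (1 + x ^ 2 / 2 + x ^ 4 / 24) = c - (x ^ 2 / 2 + x ^ 4 / 24) by ring,
    abs_le] at hcosh
  have hc₀ : 0 ≤ c := by linarith [one_le_cosh x]
  have hcx : c ≤ x ^ 2 := by nlinarith
  have hlog := abs_log_one_add_sub_le hc₀ (by nlinarith)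
  have hc3 : c ^ 3 ≤ x ^ 6 := by
    calc c ^ 3 ≤ (x ^ 2) ^ 3 := pow_le_pow_left₀ hc₀ hcx 3
      _ = x ^ 6 := by ring
  have hsq : |c ^ 2 - x ^ 4 / 4| ≤ x ^ 6 / 10 := by
    rw [show c ^ 2 - x ^ 4 / 4 = (c - x ^ 2 / 2) * (c + x ^ 2 / 2) by ring, abs_mul,
      abs_of_nonneg (by positivity : 0 ≤ c + x ^ 2 / 2)]
    have hdiff : |c - x ^ 2 / 2| ≤ x ^ 4 / 15 := by
      rw [abs_le]; constructor <;> nlinarith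
    calc |c - x ^ 2 / 2| * (c + x ^ 2 / 2) ≤ x ^ 4 / 15 * (3 / 2 * x ^ 2) :=
          mul_le_mul hdiff (by linarith) (by positivity) (by positivity)
      _ = x ^ 6 / 10 := by ring
  -- `logCoshTaylor x = (x²/2 + x⁴/24) - (x⁴/4)/2`, matched termwise against `c - c²/2`
  rw [logCoshTaylor, show cosh x = 1 + c by ring]
  rw [abs_le] at hlog hsq ⊢
  constructor <;> nlinarith

lemma abs_log_cosh_sub_logCoshTaylor_le (x : ℝ) :
    |log (cosh x) - logCoshTaylor x| ≤ 5 * x ^ 6 := by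
  rcases le_or_gt |x| 1 with hx | hx
  · exact abs_log_cosh_sub_logCoshTaylor_le_of_abs_le_one hx
  have h2 : 1 ≤ x ^ 2 := by nlinarith [sq_abs x]
  have h4 : x ^ 2 ≤ x ^ 4 := by nlinarith
  have h6 : x ^ 4 ≤ x ^ 6 := by nlinarith
  have hupper : log (cosh x) ≤ x ^ 2 / 2 := by
    simpa using log_le_log (cosh_pos x) (cosh_le_exp_half_sq x)
  have hlower := log_nonneg (one_le_cosh x)
  rw [logCoshTaylor, abs_le]; constructor <;> linarith

lemma abs_integral_sub_integral_le {α : Type*} [MeasurableSpace α] {μ : Measure α}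
    {f g h : α → ℝ} (hf : AEStronglyMeasurable f μ) (hg : Integrable g μ) (hh : Integrable h μ)
    (hfg : ∀ᵐ x ∂μ, |f x - g x| ≤ h x) :
    |(∫ x, f x ∂μ) - ∫ x, g x ∂μ| ≤ ∫ x, h x ∂μ := by
  have hfg' : Integrable (fun x => f x - g x) μ :=
    hh.mono' (hf.sub hg.aestronglyMeasurable) hfg
  have hf' : Integrable f μ := (hfg'.add hg).congr (.of_forall fun x => by simp)
  rw [← integral_sub hf' hg]
  exact norm_integral_le_of_norm_le (f := fun x => f x - g x) hh
    (by simpa only [Real.norm_eq_abs] using hfg)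

lemma integrable_pow_mul_exp_neg_mul_sq {b : ℝ} (hb : 0 < b) (n : ℕ) :
    Integrable fun x : ℝ => x ^ n * exp (-b * x ^ 2) := by
  simpa [rpow_natCast] using
    integrable_rpow_mul_exp_neg_mul_sq hb (s := n) (by linarith [n.cast_nonneg (α := ℝ)])

lemma integral_pow_add_two_mul_exp_neg_mul_sq {b : ℝ} (hb : 0 < b) (n : ℕ) :
    ∫ x : ℝ, x ^ (n + 2) * exp (-b * x ^ 2)
      = (n + 1) / (2 * b) * ∫ x : ℝ, x ^ n * exp (-b * x ^ 2) := by
  have hn := integrable_pow_mul_exp_neg_mul_sq hb n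
  have hn2 := integrable_pow_mul_exp_neg_mul_sq hb (n + 2)
  have hderiv (x : ℝ) : HasDerivAt (fun x => x ^ (n + 1) * exp (-b * x ^ 2))
      ((n + 1) * (x ^ n * exp (-b * x ^ 2)) - 2 * b * (x ^ (n + 2) * exp (-b * x ^ 2))) x := by
    have hpow : HasDerivAt (fun x : ℝ => x ^ (n + 1)) ((n + 1 : ℝ) * x ^ n) x := by
      simpa using hasDerivAt_pow (n + 1) x
    have hexp : HasDerivAt (fun x => exp (-b * x ^ 2)) (exp (-b * x ^ 2) * (-b * (2 * x))) x := by
      simpa using ((hasDerivAt_pow 2 x).const_mul (-b)).exp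
    exact (hpow.mul hexp).congr_deriv (by ring)
  have hzero := integral_eq_zero_of_hasDerivAt_of_integrable hderiv
    ((hn.const_mul _).sub (hn2.const_mul _)) (integrable_pow_mul_exp_neg_mul_sq hb (n + 1))
  rw [integral_sub (hn.const_mul _) (hn2.const_mul _), integral_const_mul,
    integral_const_mul, sub_eq_zero] at hzero
  rw [div_mul_eq_mul_div, eq_div_iff (by positivity)]
  linarith

section q0

variable {N : ℝ}

lemma q0_eq (z : ℝ) : q0 N z = (√(π * N))⁻¹ * exp (-N⁻¹ * z ^ 2) := by
  rw [q0, neg_div, div_eq_inv_mul, neg_mul]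

lemma q0_pos (hN : 0 < N) (z : ℝ) : 0 < q0 N z := by
  unfold q0; positivity

lemma integrable_q0_mul_pow (hN : 0 < N) (n : ℕ) : Integrable fun z => q0 N z * z ^ n := by
  simp_rw [q0_eq, mul_assoc, mul_comm (exp _)]
  exact (integrable_pow_mul_exp_neg_mul_sq (inv_pos.2 hN) n).const_mul _

lemma integrable_q0 (hN : 0 < N) : Integrable (q0 N) := by
  simpa using integrable_q0_mul_pow hN 0

lemma integral_q0 (hN : 0 < N) : ∫ z, q0 N z = 1 := by
  simp_rw [q0_eq, integral_const_mul, integral_gaussian, div_inv_eq_mul]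
  exact inv_mul_cancel₀ (by positivity)

lemma integral_q0_mul_pow_add_two (hN : 0 < N) (n : ℕ) :
    ∫ z, q0 N z * z ^ (n + 2) = (n + 1) * N / 2 * ∫ z, q0 N z * z ^ n := by
  simp_rw [q0_eq, mul_assoc, mul_comm (exp _), integral_const_mul,
    integral_pow_add_two_mul_exp_neg_mul_sq (inv_pos.2 hN)]
  field_simp

lemma integral_q0_mul_sq (hN : 0 < N) : ∫ z, q0 N z * z ^ 2 = N / 2 := by
  simpa [integral_q0 hN] using integral_q0_mul_pow_add_two hN 0

lemma integral_q0_mul_pow_four (hN : 0 < N) : ∫ z, q0 N z * z ^ 4 = 3 * N ^ 2 / 4 := by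
  rw [integral_q0_mul_pow_add_two hN 2, integral_q0_mul_sq hN]; ring

lemma integral_q0_mul_pow_six (hN : 0 < N) : ∫ z, q0 N z * z ^ 6 = 15 * N ^ 3 / 8 := by
  rw [integral_q0_mul_pow_add_two hN 4, integral_q0_mul_pow_four hN]; ring

lemma q0_mul_logCoshTaylor (t z : ℝ) :
    q0 N z * logCoshTaylor (t * z)
      = t ^ 2 / 2 * (q0 N z * z ^ 2) - t ^ 4 / 12 * (q0 N z * z ^ 4) := by
  rw [logCoshTaylor]; ring

lemma integrable_q0_mul_logCoshTaylor (hN : 0 < N) (t : ℝ) :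
    Integrable fun z => q0 N z * logCoshTaylor (t * z) := by
  simp_rw [q0_mul_logCoshTaylor]
  exact ((integrable_q0_mul_pow hN 2).const_mul _).sub ((integrable_q0_mul_pow hN 4).const_mul _)

lemma integral_q0_mul_logCoshTaylor (hN : 0 < N) (t : ℝ) :
    ∫ z, q0 N z * logCoshTaylor (t * z) = t ^ 2 * N / 4 - t ^ 4 * N ^ 2 / 16 := by
  simp_rw [q0_mul_logCoshTaylor]
  rw [integral_sub ((integrable_q0_mul_pow hN 2).const_mul _)
    ((integrable_q0_mul_pow hN 4).const_mul _), integral_const_mul, integral_const_mul,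
    integral_q0_mul_sq hN, integral_q0_mul_pow_four hN]
  ring

lemma llr_eq (hN : 0 < N) (a z : ℝ) :
    llr N a z = -(a ^ 2 / N) + log (cosh (2 * a / N * z)) := by
  have hplus : exp (-(z - a) ^ 2 / N)
      = exp (-(a ^ 2 / N)) * exp (2 * a / N * z) * exp (-z ^ 2 / N) := by
    rw [← exp_add, ← exp_add]; ring_nf
  have hminus : exp (-(z - -a) ^ 2 / N)
      = exp (-(a ^ 2 / N)) * exp (-(2 * a / N * z)) * exp (-z ^ 2 / N) := by
    rw [← exp_add, ← exp_add]; ring_nf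
  have hratio : qmix N a z / q0 N z = exp (-(a ^ 2 / N)) * cosh (2 * a / N * z) := by
    rw [div_eq_iff (q0_pos hN z).ne', qmix, qa, qa, q0, cosh_eq, hplus, hminus]
    ring
  rw [_root_.llr, hratio, log_mul (exp_pos _).ne' (cosh_pos _).ne', log_exp]

lemma abs_q0_mul_llr_sub_le (hN : 0 < N) (a z : ℝ) :
    |q0 N z * llr N a z - q0 N z * (-(a ^ 2 / N) + logCoshTaylor (2 * a / N * z))|
      ≤ 5 * (2 * a / N) ^ 6 * (q0 N z * z ^ 6) := by
  rw [llr_eq hN, ← mul_sub, add_sub_add_left_eq_sub, abs_mul, abs_of_pos (q0_pos hN z)]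
  calc q0 N z * |log (cosh (2 * a / N * z)) - logCoshTaylor (2 * a / N * z)|
      ≤ q0 N z * (5 * (2 * a / N * z) ^ 6) :=
        mul_le_mul_of_nonneg_left (abs_log_cosh_sub_logCoshTaylor_le _) (q0_pos hN z).le
    _ = 5 * (2 * a / N) ^ 6 * (q0 N z * z ^ 6) := by ring

end q0

/-- The mean of the log-likelihood ratio `L` under `q₀` equals `-a⁴/N² + O(a⁶)` as `a → 0⁺`. -/
theorem mean_llr_q0 (N : ℝ) (hN : 0 < N) :
    ∃ C > (0 : ℝ), ∃ a₀ > (0 : ℝ), ∀ a : ℝ, 0 < a → a ≤ a₀ →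
      |(∫ z : ℝ, q0 N z * llr N a z) + a ^ 4 / N ^ 2| ≤ C * a ^ 6 := by
  refine ⟨600 / N ^ 3, by positivity, 1, one_pos, fun a _ _ => ?_⟩
  have hmeas : AEStronglyMeasurable fun z => q0 N z * llr N a z := by
    unfold _root_.llr qmix qa q0; fun_prop
  have happrox : Integrable fun z => q0 N z * (-(a ^ 2 / N) + logCoshTaylor (2 * a / N * z)) := by
    simp_rw [mul_add]
    exact ((integrable_q0 hN).mul_const _).add (integrable_q0_mul_logCoshTaylor hN _)
  have hmean : ∫ z, q0 N z * (-(a ^ 2 / N) + logCoshTaylor (2 * a / N * z)) = -(a ^ 4 / N ^ 2) := by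
    simp_rw [mul_add]
    rw [integral_add ((integrable_q0 hN).mul_const _) (integrable_q0_mul_logCoshTaylor hN _),
      integral_mul_const, integral_q0 hN, integral_q0_mul_logCoshTaylor hN]
    field_simp
    ring
  calc |(∫ z, q0 N z * llr N a z) + a ^ 4 / N ^ 2|
      = |(∫ z, q0 N z * llr N a z)
          - ∫ z, q0 N z * (-(a ^ 2 / N) + logCoshTaylor (2 * a / N * z))| := by
        rw [hmean, sub_neg_eq_add]
    _ ≤ ∫ z, 5 * (2 * a / N) ^ 6 * (q0 N z * z ^ 6) :=
        abs_integral_sub_integral_le hmeas happrox ((integrable_q0_mul_pow hN 6).const_mul _)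
          (.of_forall (abs_q0_mul_llr_sub_le hN a))
    _ = 600 / N ^ 3 * a ^ 6 := by
        rw [integral_const_mul, integral_q0_mul_pow_six hN]
        field_simp
        ring
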